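/- Let π̄* be an optimal policy of the cost-based MDP M̄, with value functions Q̄* and V̄*. Let G_0 be the set of admissible intervention rules (Q̄, μ, 0) with threshold 0 satisfying Q̄(d_0, μ) = V̄*(d_0), and note G* = (Q̄*, π̄*, 0) ∈ G_0. For any G ∈ G_0 and any policy π, let M̃ and M̃* be the absorbing MDPs induced by the intervention sets of G and G* respectively (with the same penalty R̃ ≤ 0), and let d̃^π and d̃^{*,π} be the discounted state-action distributions of π in M̃ and M̃*. Then the support of d̃^π restricted to S × A is contained in the support of d̃^{*,π} restricted to S × A. -/

import Mathlib

/-!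
Call a state `s` tight for the rule `(Qb, μ)` if `Qb(s, μ) = V̄*(s)`. Admissibility makes
`Qb(·, μ)` a supersolution of the Bellman equation of `μ`, so `V̄* ≤ V̄^μ ≤ Qb(·, μ)`, and then
`Qb(d₀, μ) = V̄*(d₀)` forces every initial state to be tight. At a tight safe state an action that
the rule does not block satisfies
`Q̄*(s,a) ≤ c(s,a) + γ P Qb(·,μ) ≤ Qb(s,a) ≤ Qb(s,μ) = V̄*(s) ≤ Q̄*(s,a)`,
so it is optimal, hence not blocked by `G*`, and (for `γ > 0`) all its successors are tight. So
trajectories of `π` in `M̃` stay among tight states and are never cut short in `M̃*` either: the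
state distributions of `π` in `M̃` are dominated, time by time, by those in `M̃*`.
-/

open scoped BigOperators Classical

noncomputable section

namespace SafeRL

variable {S A : Type*} [Fintype S] [Fintype A] [Nonempty A]

/-- `d` is a probability distribution on the finite type `S`. -/
def IsDist (d : S → ℝ) : Prop := (∀ s, 0 ≤ d s) ∧ ∑ s, d s = 1

/-- `P` is a transition kernel. -/
def IsKernel (P : S → A → S → ℝ) : Prop := ∀ s a, IsDist (P s a)

/-- `π` is a (Markov stationary stochastic) policy. -/
def IsPolicy (π : S → A → ℝ) : Prop := ∀ s, (∀ a, 0 ≤ π s a) ∧ ∑ a, π s a = 1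

/-- Point mass at `s`. -/
def pureDist (s : S) : S → ℝ := fun s' => if s' = s then 1 else 0

/-- One-step state-distribution update under policy `π`. -/
def step (P : S → A → S → ℝ) (π : S → A → ℝ) (d : S → ℝ) : S → ℝ :=
  fun s' => ∑ s, ∑ a, d s * π s a * P s a s'

/-- State distribution at time `t` when running `π` from `d0`. -/
def distAt (P : S → A → S → ℝ) (π : S → A → ℝ) (d0 : S → ℝ) (t : ℕ) : S → ℝ :=
  (step P π)^[t] d0

/-- Expected discounted return `V^π(d0)` of policy `π` from initial distribution `d0`. -/
def value (P : S → A → S → ℝ) (π : S → A → ℝ) (r : S → A → ℝ) (γ : ℝ) (d0 : S → ℝ) : ℝ :=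
  ∑' t : ℕ, γ ^ t * ∑ s, ∑ a, distAt P π d0 t s * π s a * r s a

/-- State value function `V^π(s)`. -/
def vf (P : S → A → S → ℝ) (π : S → A → ℝ) (r : S → A → ℝ) (γ : ℝ) (s : S) : ℝ :=
  value P π r γ (pureDist s)

/-- State-action value function `Q^π(s,a)`. -/
def qf (P : S → A → S → ℝ) (π : S → A → ℝ) (r : S → A → ℝ) (γ : ℝ) (s : S) (a : A) : ℝ :=
  r s a + γ * ∑ s', P s a s' * vf P π r γ s'

/-- The cost function `c(s,a) = 1{s = s_▷}` of the cost-based MDP. -/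
def cost (sbad : S) : S → A → ℝ := fun s _ => if s = sbad then 1 else 0

/-- Discounted state distribution `d^π(s)`. -/
def dsd (P : S → A → S → ℝ) (π : S → A → ℝ) (γ : ℝ) (d0 : S → ℝ) (s : S) : ℝ :=
  (1 - γ) * ∑' t : ℕ, γ ^ t * distAt P π d0 t s

/-- Discounted state-action distribution `d^π(s,a)`. -/
def dsa (P : S → A → S → ℝ) (π : S → A → ℝ) (γ : ℝ) (d0 : S → ℝ) (s : S) (a : A) : ℝ :=
  (1 - γ) * ∑' t : ℕ, γ ^ t * distAt P π d0 t s * π s a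

/-- Probability of the `h`-step trajectory prefix `f` when running `π` from `d`. -/
def prefProb (P : S → A → S → ℝ) (π : S → A → ℝ) :
    (S → ℝ) → (h : ℕ) → (Fin h → S × A) → ℝ
  | _, 0, _ => 1
  | d, h + 1, f =>
      d (f 0).1 * π (f 0).1 (f 0).2 *
        prefProb P π (P (f 0).1 (f 0).2) h (fun i => f i.succ)

/-- Probability that the `h`-step trajectory prefix generated by `π` from `d0` satisfies `E`. -/
def eventProb (P : S → A → S → ℝ) (π : S → A → ℝ) (d0 : S → ℝ) (h : ℕ)
    (E : (Fin h → S × A) → Prop) : ℝ :=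
  ∑ f : Fin h → S × A, if E f then prefProb P π d0 h f else 0

/-- `Q̄(s,μ) = E_{a ∼ μ(·|s)} Q̄(s,a)`. -/
def Qpol (Qb : S → A → ℝ) (μ : S → A → ℝ) (s : S) : ℝ := ∑ a, μ s a * Qb s a

/-- Advantage-like function `Ā(s,a) = Q̄(s,a) − Q̄(s,μ)`. -/
def Abar (Qb : S → A → ℝ) (μ : S → A → ℝ) (s : S) (a : A) : ℝ := Qb s a - Qpol Qb μ s

/-- The intervention set `I = {(s,a) ∈ S_safe × A : Ā(s,a) > η}`. -/
def intSet (Qb : S → A → ℝ) (μ : S → A → ℝ) (η : ℝ) (sbad sabs : S) : Set (S × A) :=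
  {p | p.1 ≠ sbad ∧ p.1 ≠ sabs ∧ η < Abar Qb μ p.1 p.2}

/-- The shielded policy `π' = G(π)`. -/
def shield (π μ : S → A → ℝ) (I : Set (S × A)) (sbad sabs : S) : S → A → ℝ :=
  fun s a =>
    if s = sbad ∨ s = sabs then π s a
    else (if (s, a) ∈ I then 0 else π s a)
      + μ s a * (1 - ∑ a', if (s, a') ∈ I then π s a' else 0)

/-- `σ`-admissibility of the intervention rule `(Q̄, μ, η)` (the condition does not
involve `η`): on safe states, `Q̄ ∈ [0,γ]` and
`c(s,a) + γ E_{s'∼P(·|s,a)}[Q̄(s',μ)] ≤ Q̄(s,a) + σ`. -/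
def SigmaAdmissible (P : S → A → S → ℝ) (Qb : S → A → ℝ) (μ : S → A → ℝ)
    (γ σ : ℝ) (sbad sabs : S) : Prop :=
  ∀ s, s ≠ sbad → s ≠ sabs → ∀ a : A,
    (0 ≤ Qb s a ∧ Qb s a ≤ γ) ∧
    cost sbad s a + γ * ∑ s', P s a s' * Qpol Qb μ s' ≤ Qb s a + σ

/-- Transition kernel of the absorbing MDP `M̃`; `none` plays the role of `s_†`. -/
def Ptil (P : S → A → S → ℝ) (I : Set (S × A)) : Option S → A → Option S → ℝ :=
  fun s? a s'? =>
    match s? with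
    | none => if s'? = none then 1 else 0
    | some s =>
        if (s, a) ∈ I then (if s'? = none then 1 else 0)
        else
          match s'? with
          | none => 0
          | some s' => P s a s'

/-- Reward of the absorbing MDP `M̃` with penalty `Rt` on the intervention set. -/
def rtil (r : S → A → ℝ) (I : Set (S × A)) (Rt : ℝ) : Option S → A → ℝ :=
  fun s? a =>
    match s? with
    | none => 0
    | some s => if (s, a) ∈ I then Rt else r s a

/-- Extension of a policy on `S` to `S ∪ {s_†}`, uniform at `s_†`. -/
def extPol (π : S → A → ℝ) : Option S → A → ℝ :=
  fun s? a =>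
    match s? with
    | none => (Fintype.card A : ℝ)⁻¹
    | some s => π s a

/-- Extension of an initial distribution on `S` to `S ∪ {s_†}`. -/
def extDist (d0 : S → ℝ) : Option S → ℝ :=
  fun s? => match s? with | none => 0 | some s => d0 s

/-- `P_G(π)`: discounted probability that a trajectory of `π` in `M` visits `I`. -/
def PG (P : S → A → S → ℝ) (π : S → A → ℝ) (d0 : S → ℝ) (γ : ℝ)
    (I : Set (S × A)) : ℝ :=
  (1 - γ) * ∑' h : ℕ, γ ^ h * eventProb P π d0 h (fun f => ∃ i, f i ∈ I)

/-- The deterministic policy associated to a map `g : S → A`. -/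
def detPol (g : S → A) : S → A → ℝ := fun s a => if a = g s then 1 else 0

/-- Bellman optimality operator `T̄` of the cost-based MDP. -/
def Tbar (P : S → A → S → ℝ) (sbad : S) (γ : ℝ) (Q : S → A → ℝ) : S → A → ℝ :=
  fun s a =>
    cost sbad s a +
      γ * ∑ s', P s a s' * Finset.univ.inf' Finset.univ_nonempty (fun a' => Q s' a')

end SafeRL

namespace SafeRL

lemma eq_of_sum_mul_eq_of_le {ι : Type*} [Fintype ι] {w f g : ι → ℝ} (hw : ∀ i, 0 ≤ w i)
    (hfg : ∀ i, f i ≤ g i) (h : ∑ i, w i * f i = ∑ i, w i * g i) {i : ι} (hi : w i ≠ 0) :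
    f i = g i :=
  mul_left_cancel₀ hi <| (Finset.sum_eq_sum_iff_of_le fun j _ =>
    mul_le_mul_of_nonneg_left (hfg j) (hw j)).1 h i (Finset.mem_univ i)

section Policy

variable {S A : Type*} [Fintype A]

lemma IsPolicy.le_one {π : S → A → ℝ} (hπ : IsPolicy π) (s : S) (a : A) : π s a ≤ 1 :=
  (hπ s).2 ▸ Finset.single_le_sum (fun i _ => (hπ s).1 i) (Finset.mem_univ a)

lemma isPolicy_detPol (g : S → A) : IsPolicy (detPol g) :=
  fun s => ⟨fun a => by unfold detPol; split_ifs <;> norm_num, by simp [detPol]⟩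

lemma sum_detPol_mul (g : S → A) (s : S) (f : A → ℝ) : ∑ a, detPol g s a * f a = f (g s) := by
  simp [detPol]

lemma isPolicy_extPol [Nonempty A] {π : S → A → ℝ} (hπ : IsPolicy π) : IsPolicy (extPol π)
  | none => ⟨fun _ => by simp only [extPol]; positivity, by simp [extPol]⟩
  | some s => hπ s

end Policy

variable {S A : Type*} [Fintype S] [Fintype A]

lemma IsDist.le_one {d : S → ℝ} (hd : IsDist d) (s : S) : d s ≤ 1 :=
  hd.2 ▸ Finset.single_le_sum (fun i _ => hd.1 i) (Finset.mem_univ s)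

lemma isDist_pureDist (s : S) : IsDist (pureDist s) :=
  ⟨fun _ => by unfold pureDist; split_ifs <;> norm_num, by simp [pureDist]⟩

lemma sum_pureDist_mul (s : S) (g : S → ℝ) : ∑ s', pureDist s s' * g s' = g s := by
  simp [pureDist, ite_mul]

lemma isDist_step {P : S → A → S → ℝ} {π : S → A → ℝ} {d : S → ℝ}
    (hd : IsDist d) (hP : IsKernel P) (hπ : IsPolicy π) : IsDist (step P π d) := by
  refine ⟨fun s' => Finset.sum_nonneg fun s _ => Finset.sum_nonneg fun a _ =>
    mul_nonneg (mul_nonneg (hd.1 s) ((hπ s).1 a)) ((hP s a).1 s'), ?_⟩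
  change ∑ s', ∑ s, ∑ a, d s * π s a * P s a s' = 1
  rw [Finset.sum_comm, ← hd.2]
  refine Finset.sum_congr rfl fun s _ => ?_
  rw [Finset.sum_comm]
  simp_rw [← Finset.mul_sum, (hP s _).2, mul_one]
  rw [← Finset.mul_sum, (hπ s).2, mul_one]

lemma distAt_succ (P : S → A → S → ℝ) (π : S → A → ℝ) (d : S → ℝ) (t : ℕ) :
    distAt P π d (t + 1) = step P π (distAt P π d t) :=
  Function.iterate_succ_apply' _ _ _

lemma isDist_distAt {P : S → A → S → ℝ} {π : S → A → ℝ} {d : S → ℝ}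
    (hd : IsDist d) (hP : IsKernel P) (hπ : IsPolicy π) (t : ℕ) : IsDist (distAt P π d t) := by
  induction t with
  | zero => exact hd
  | succ t ih => rw [distAt_succ]; exact isDist_step ih hP hπ

def stepLinearMap (P : S → A → S → ℝ) (π : S → A → ℝ) : (S → ℝ) →ₗ[ℝ] (S → ℝ) where
  toFun := step P π
  map_add' d e := by ext; simp [step, add_mul, Finset.sum_add_distrib]
  map_smul' c d := by ext; simp [step, Finset.mul_sum, mul_assoc]

lemma distAt_eq_sum_smul (P : S → A → S → ℝ) (π : S → A → ℝ) (d : S → ℝ) (t : ℕ) :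
    distAt P π d t = ∑ s, d s • distAt P π (pureDist s) t := by
  have hiter : ∀ e, distAt P π e t = (stepLinearMap P π ^ t) e := fun e =>
    (Module.End.pow_apply (stepLinearMap P π) t e).symm
  have hd : d = ∑ s, d s • pureDist s := by ext; simp [pureDist]
  simp_rw [hiter]
  conv_lhs => rw [hd]
  simp

lemma abs_sum_mul_le_sum_abs {d : S → ℝ} {π : S → A → ℝ} (hd : IsDist d) (hπ : IsPolicy π)
    (r : S → A → ℝ) : |∑ s, ∑ a, d s * π s a * r s a| ≤ ∑ s, ∑ a, |r s a| := by
  refine (Finset.abs_sum_le_sum_abs _ _).trans (Finset.sum_le_sum fun s _ =>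
    (Finset.abs_sum_le_sum_abs _ _).trans (Finset.sum_le_sum fun a _ => ?_))
  rw [abs_mul, abs_of_nonneg (mul_nonneg (hd.1 s) ((hπ s).1 a))]
  exact mul_le_of_le_one_left (abs_nonneg _)
    (mul_le_one₀ (hd.le_one s) ((hπ s).1 a) (hπ.le_one s a))

section Value

variable {P : S → A → S → ℝ} {π : S → A → ℝ} {γ : ℝ}

lemma summable_value (hP : IsKernel P) (hπ : IsPolicy π) (hγ0 : 0 ≤ γ) (hγ1 : γ < 1)
    (r : S → A → ℝ) {d : S → ℝ} (hd : IsDist d) :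
    Summable fun t => γ ^ t * ∑ s, ∑ a, distAt P π d t s * π s a * r s a := by
  refine ((summable_geometric_of_lt_one hγ0 hγ1).mul_right
    (∑ s, ∑ a, |r s a|)).of_norm_bounded fun t => ?_
  rw [Real.norm_eq_abs, abs_mul, abs_of_nonneg (pow_nonneg hγ0 t)]
  exact mul_le_mul_of_nonneg_left
    (abs_sum_mul_le_sum_abs (isDist_distAt hd hP hπ t) hπ r) (pow_nonneg hγ0 t)

lemma value_eq_add_value_step (hP : IsKernel P) (hπ : IsPolicy π) (hγ0 : 0 ≤ γ) (hγ1 : γ < 1)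
    (r : S → A → ℝ) {d : S → ℝ} (hd : IsDist d) :
    value P π r γ d = ∑ s, ∑ a, d s * π s a * r s a + γ * value P π r γ (step P π d) := by
  rw [value, (summable_value hP hπ hγ0 hγ1 r hd).tsum_eq_zero_add, value, ← tsum_mul_left]
  simp only [distAt, Function.iterate_succ_apply, pow_zero, one_mul, pow_succ]
  congr 1
  exact tsum_congr fun t => by ring

lemma value_eq_sum_mul_vf (hP : IsKernel P) (hπ : IsPolicy π) (hγ0 : 0 ≤ γ) (hγ1 : γ < 1)
    (r : S → A → ℝ) (d : S → ℝ) : value P π r γ d = ∑ s, d s * vf P π r γ s := by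
  have hterm : ∀ t, γ ^ t * ∑ s, ∑ a, distAt P π d t s * π s a * r s a =
      ∑ s₀, d s₀ * (γ ^ t * ∑ s, ∑ a, distAt P π (pureDist s₀) t s * π s a * r s a) := by
    intro t
    rw [distAt_eq_sum_smul]
    simp only [Finset.sum_apply, Pi.smul_apply, smul_eq_mul, Finset.sum_mul, Finset.mul_sum]
    rw [Finset.sum_comm_cycle]
    exact Finset.sum_congr rfl fun _ _ => Finset.sum_congr rfl fun _ _ =>
      Finset.sum_congr rfl fun _ _ => by ring
  rw [value, tsum_congr hterm, Summable.tsum_finsetSum fun s₀ _ =>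
    (summable_value hP hπ hγ0 hγ1 r (isDist_pureDist s₀)).mul_left _]
  simp only [tsum_mul_left, vf, value]

theorem vf_eq_sum_mul_qf (hP : IsKernel P) (hπ : IsPolicy π) (hγ0 : 0 ≤ γ) (hγ1 : γ < 1)
    (r : S → A → ℝ) (s : S) : vf P π r γ s = ∑ a, π s a * qf P π r γ s a := by
  rw [vf, value_eq_add_value_step hP hπ hγ0 hγ1 r (isDist_pureDist s),
    value_eq_sum_mul_vf hP hπ hγ0 hγ1]
  simp only [qf, step, pureDist, mul_add, Finset.sum_add_distrib, Finset.mul_sum, Finset.sum_mul,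
    ite_mul, one_mul, zero_mul, Finset.sum_ite_irrel, Finset.sum_const_zero,
    Finset.sum_ite_eq', Finset.mem_univ, ↓reduceIte, add_right_inj]
  rw [Finset.sum_comm]
  exact Finset.sum_congr rfl fun _ _ => Finset.sum_congr rfl fun _ _ => by ring

end Value

theorem dsa_ne_zero_iff {P : S → A → S → ℝ} {π : S → A → ℝ} {γ : ℝ} {d : S → ℝ}
    (hP : IsKernel P) (hπ : IsPolicy π) (hd : IsDist d) (hγ0 : 0 ≤ γ) (hγ1 : γ < 1)
    (s : S) (a : A) : dsa P π γ d s a ≠ 0 ↔ ∃ t, γ ^ t * distAt P π d t s * π s a ≠ 0 := by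
  have hD := isDist_distAt hd hP hπ
  have hnonneg : ∀ t, 0 ≤ γ ^ t * distAt P π d t s * π s a := fun t =>
    mul_nonneg (mul_nonneg (pow_nonneg hγ0 t) ((hD t).1 s)) ((hπ s).1 a)
  have hsum : Summable fun t => γ ^ t * distAt P π d t s * π s a :=
    (summable_geometric_of_lt_one hγ0 hγ1).of_nonneg_of_le hnonneg fun t =>
      (mul_le_of_le_one_right (mul_nonneg (pow_nonneg hγ0 t) ((hD t).1 s)) (hπ.le_one s a)).trans
        (mul_le_of_le_one_right (pow_nonneg hγ0 t) ((hD t).le_one s))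
  rw [dsa, mul_ne_zero_iff, and_iff_right (sub_ne_zero.2 hγ1.ne')]
  refine ⟨fun h => ?_, fun ⟨t, ht⟩ => (hsum.tsum_pos hnonneg t ((hnonneg t).lt_of_ne' ht)).ne'⟩
  by_contra! hall
  exact h (by simp [hall])

section Bellman

variable {P : S → A → S → ℝ} {π : S → A → ℝ} {r : S → A → ℝ} {γ : ℝ}

theorem vf_le_of_bellman_le (hP : IsKernel P) (hπ : IsPolicy π) (hγ0 : 0 ≤ γ) (hγ1 : γ < 1)
    {W : S → ℝ} (hW : ∀ s, ∑ a, π s a * (r s a + γ * ∑ s', P s a s' * W s') ≤ W s) (s : S) :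
    vf P π r γ s ≤ W s := by
  have : Nonempty S := ⟨s⟩
  obtain ⟨m, hm⟩ := Finite.exists_max fun s => vf P π r γ s - W s
  have hP_avg : ∀ a, ∑ s', P m a s' * (vf P π r γ s' - W s') ≤ vf P π r γ m - W m := fun a =>
    calc _ ≤ ∑ s', P m a s' * (vf P π r γ m - W m) :=
          Finset.sum_le_sum fun s' _ => mul_le_mul_of_nonneg_left (hm s') ((hP m a).1 s')
      _ = _ := by rw [← Finset.sum_mul, (hP m a).2, one_mul]
  -- the maximal gap `vf - W` is at most `γ` times itself, hence nonpositive
  have hgap : vf P π r γ m - W m ≤ γ * (vf P π r γ m - W m) :=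
    calc vf P π r γ m - W m
        ≤ ∑ a, π m a * qf P π r γ m a - ∑ a, π m a * (r m a + γ * ∑ s', P m a s' * W s') := by
          rw [vf_eq_sum_mul_qf hP hπ hγ0 hγ1]; linarith [hW m]
      _ = γ * ∑ a, π m a * ∑ s', P m a s' * (vf P π r γ s' - W s') := by
          rw [← Finset.sum_sub_distrib, Finset.mul_sum]
          refine Finset.sum_congr rfl fun a _ => ?_
          simp only [qf, mul_sub, Finset.sum_sub_distrib]
          ring
      _ ≤ γ * ∑ a, π m a * (vf P π r γ m - W m) :=
          mul_le_mul_of_nonneg_left (Finset.sum_le_sum fun a _ =>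
            mul_le_mul_of_nonneg_left (hP_avg a) ((hπ m).1 a)) hγ0
      _ = γ * (vf P π r γ m - W m) := by rw [← Finset.sum_mul, (hπ m).2, one_mul]
  nlinarith [hm s]

theorem vf_le_qf_of_forall_vf_le [Nonempty A] (hP : IsKernel P) (hπ : IsPolicy π)
    (hγ0 : 0 ≤ γ) (hγ1 : γ < 1) (hopt : ∀ π', IsPolicy π' → ∀ s, vf P π r γ s ≤ vf P π' r γ s)
    (s : S) (a : A) : vf P π r γ s ≤ qf P π r γ s a := by
  choose g hg using fun s => Finite.exists_min (qf P π r γ s)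
  have hgreedy : ∀ s, qf P π r γ s (g s) ≤ vf P π r γ s := fun s => by
    rw [vf_eq_sum_mul_qf hP hπ hγ0 hγ1]
    calc _ = ∑ a, π s a * qf P π r γ s (g s) := by rw [← Finset.sum_mul, (hπ s).2, one_mul]
      _ ≤ _ := Finset.sum_le_sum fun a _ => mul_le_mul_of_nonneg_left (hg s a) ((hπ s).1 a)
  have hgreedy_le : vf P (detPol g) r γ s ≤ qf P π r γ s (g s) := by
    refine vf_le_of_bellman_le (W := fun s => qf P π r γ s (g s)) hP (isPolicy_detPol g) hγ0 hγ1
      (fun s => ?_) s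
    rw [sum_detPol_mul, qf]
    exact add_le_add_right (mul_le_mul_of_nonneg_left (Finset.sum_le_sum fun s' _ =>
      mul_le_mul_of_nonneg_left (hgreedy s') ((hP s (g s)).1 s')) hγ0) _
  exact (hopt _ (isPolicy_detPol g) s).trans (hgreedy_le.trans (hg s a))

end Bellman

section CostMDP

variable {P : S → A → S → ℝ} {γ : ℝ} {sbad sabs : S}

lemma vf_cost_absorbing {π : S → A → ℝ} (hP : IsKernel P) (hπ : IsPolicy π) (hγ0 : 0 ≤ γ)
    (hγ1 : γ < 1) (hne : sbad ≠ sabs) (hPabs : ∀ a, P sabs a = pureDist sabs) :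
    vf P π (cost sbad) γ sabs = 0 := by
  have h := vf_eq_sum_mul_qf hP hπ hγ0 hγ1 (cost sbad) sabs
  simp only [qf, hPabs, sum_pureDist_mul, cost, if_neg hne.symm, zero_add] at h
  rw [← Finset.sum_mul, (hπ sabs).2, one_mul] at h
  have : (1 - γ) * vf P π (cost sbad) γ sabs = 0 := by linarith
  exact (mul_eq_zero.1 this).resolve_left (by linarith)

lemma cost_add_le_of_sigmaAdmissible {Qb μ : S → A → ℝ} (hne : sbad ≠ sabs)
    (hPbad : ∀ a, P sbad a = pureDist sabs) (hPabs : ∀ a, P sabs a = pureDist sabs)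
    (hQbad : ∀ a, Qb sbad a = 1) (hQabs : ∀ a, Qb sabs a = 0)
    (hadm : SigmaAdmissible P Qb μ γ 0 sbad sabs) (s : S) (a : A) :
    cost sbad s a + γ * ∑ s', P s a s' * Qpol Qb μ s' ≤ Qb s a := by
  have hQpol_abs : Qpol Qb μ sabs = 0 := by simp [Qpol, hQabs]
  by_cases hb : s = sbad
  · subst hb
    simp [cost, hPbad, sum_pureDist_mul, hQpol_abs, hQbad]
  by_cases ha : s = sabs
  · subst ha
    simp [cost, hPabs, sum_pureDist_mul, hQpol_abs, hQabs, hne.symm]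
  simpa using (hadm s hb ha a).2

lemma vf_le_qpol_of_sigmaAdmissible {Qb μ : S → A → ℝ} (hP : IsKernel P) (hμ : IsPolicy μ)
    (hγ0 : 0 ≤ γ) (hγ1 : γ < 1) (hne : sbad ≠ sabs)
    (hPbad : ∀ a, P sbad a = pureDist sabs) (hPabs : ∀ a, P sabs a = pureDist sabs)
    (hQbad : ∀ a, Qb sbad a = 1) (hQabs : ∀ a, Qb sabs a = 0)
    (hadm : SigmaAdmissible P Qb μ γ 0 sbad sabs) (s : S) :
    vf P μ (cost sbad) γ s ≤ Qpol Qb μ s :=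
  vf_le_of_bellman_le hP hμ hγ0 hγ1 (fun s => Finset.sum_le_sum fun a _ =>
    mul_le_mul_of_nonneg_left
      (cost_add_le_of_sigmaAdmissible hne hPbad hPabs hQbad hQabs hadm s a) ((hμ s).1 a)) s

end CostMDP

section Tight

variable {P : S → A → S → ℝ} {γ : ℝ} {sbad sabs : S} {Qb μ πstar : S → A → ℝ}

theorem notMem_intSet_and_tight_succ (hP : IsKernel P) (hπstar : IsPolicy πstar) (hγ0 : 0 < γ)
    (hγ1 : γ < 1) (hne : sbad ≠ sabs) (hPbad : ∀ a, P sbad a = pureDist sabs)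
    (hPabs : ∀ a, P sabs a = pureDist sabs) (hQabs : ∀ a, Qb sabs a = 0)
    (hadm : SigmaAdmissible P Qb μ γ 0 sbad sabs)
    (hVQ : ∀ s a, vf P πstar (cost sbad) γ s ≤ qf P πstar (cost sbad) γ s a)
    (hVμ : ∀ s, vf P πstar (cost sbad) γ s ≤ Qpol Qb μ s)
    {s : S} (hs : Qpol Qb μ s = vf P πstar (cost sbad) γ s) {a : A}
    (ha : (s, a) ∉ intSet Qb μ 0 sbad sabs) :
    (s, a) ∉ intSet (qf P πstar (cost sbad) γ) πstar 0 sbad sabs ∧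
      ∀ s', 0 < P s a s' → Qpol Qb μ s' = vf P πstar (cost sbad) γ s' := by
  by_cases hunsafe : s = sbad ∨ s = sabs
  · refine ⟨fun h => hunsafe.elim h.1 h.2.1, fun s' hs' => ?_⟩
    have hs' : s' = sabs := by
      by_contra h
      rcases hunsafe with rfl | rfl <;> simp [hPbad, hPabs, pureDist, h] at hs'
    rw [hs', vf_cost_absorbing hP hπstar hγ0.le hγ1 hne hPabs]
    simp [Qpol, hQabs]
  obtain ⟨hb, hsa⟩ := not_or.1 hunsafe
  set V := vf P πstar (cost sbad) γ
  set gap := ∑ s', P s a s' * Qpol Qb μ s' - ∑ s', P s a s' * V s'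
  have hgap : 0 ≤ gap := sub_nonneg.2 (Finset.sum_le_sum fun s' _ =>
    mul_le_mul_of_nonneg_left (hVμ s') ((hP s a).1 s'))
  have hQb : Qb s a ≤ Qpol Qb μ s := not_lt.1 fun h => ha ⟨hb, hsa, sub_pos.2 h⟩
  have hchain : qf P πstar (cost sbad) γ s a + γ * gap ≤ V s :=
    calc qf P πstar (cost sbad) γ s a + γ * gap
        = cost sbad s a + γ * ∑ s', P s a s' * Qpol Qb μ s' := by
          simp only [qf, gap]; ring
      _ ≤ Qb s a := by simpa using (hadm s hb hsa a).2
      _ ≤ V s := hQb.trans hs.le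
  have hgap0 : gap = 0 := by nlinarith [hVQ s a]
  refine ⟨fun ⟨_, _, hlt⟩ => ?_, fun s' hs' => ?_⟩
  · have hV : Qpol (qf P πstar (cost sbad) γ) πstar s = V s :=
      (vf_eq_sum_mul_qf hP hπstar hγ0.le hγ1 _ s).symm
    simp only [Abar, hV] at hlt
    nlinarith
  · exact (eq_of_sum_mul_eq_of_le (hP s a).1 hVμ (sub_eq_zero.1 hgap0).symm hs'.ne').symm

end Tight

section Absorbing

variable {P : S → A → S → ℝ} {π : S → A → ℝ} {d : S → ℝ}

omit [Fintype A] in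
lemma isKernel_Ptil (hP : IsKernel P) (I : Set (S × A)) : IsKernel (Ptil P I) := by
  intro s? a
  refine ⟨fun s'? => ?_, ?_⟩
  · rcases s? with _ | s <;> rcases s'? with _ | s' <;> simp only [Ptil] <;> split_ifs <;>
      simp [(hP _ _).1 _]
  · rcases s? with _ | s
    · simp [Ptil]
    · by_cases h : (s, a) ∈ I
      · simp [Ptil, h]
      · simpa [Ptil, h, Fintype.sum_option] using (hP s a).2

lemma isDist_extDist (hd : IsDist d) : IsDist (extDist d) :=
  ⟨fun | none => le_rfl | some s => hd.1 s, by simpa [extDist, Fintype.sum_option] using hd.2⟩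

lemma step_Ptil_some (I : Set (S × A)) (D : Option S → ℝ) (s' : S) :
    step (Ptil P I) (extPol π) D (some s') =
      ∑ s, ∑ a, D (some s) * π s a * (if (s, a) ∈ I then 0 else P s a s') := by
  simp only [step, Fintype.sum_option, Ptil, reduceCtorEq, if_false, mul_zero,
    Finset.sum_const_zero, zero_add]
  refine Finset.sum_congr rfl fun s _ => Finset.sum_congr rfl fun a _ => ?_
  split_ifs <;> rfl

variable {I₁ I₂ : Set (S × A)}

lemma mem_of_distAt_Ptil_ne_zero (hP : IsKernel P) {G : Set S} (hdG : ∀ s, d s ≠ 0 → s ∈ G)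
    (hG : ∀ s ∈ G, ∀ a, (s, a) ∉ I₁ → ∀ s', 0 < P s a s' → s' ∈ G) {t : ℕ} {s : S}
    (h : distAt (Ptil P I₁) (extPol π) (extDist d) t (some s) ≠ 0) : s ∈ G := by
  induction t generalizing s with
  | zero => exact hdG s h
  | succ t ih =>
    rw [distAt_succ, step_Ptil_some] at h
    obtain ⟨s₁, -, h⟩ := Finset.exists_ne_zero_of_sum_ne_zero h
    obtain ⟨a₁, -, h⟩ := Finset.exists_ne_zero_of_sum_ne_zero h
    by_cases hI : (s₁, a₁) ∈ I₁
    · simp [hI] at h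
    rw [if_neg hI] at h
    obtain ⟨hDπ, hPs⟩ := mul_ne_zero_iff.1 h
    exact hG s₁ (ih (left_ne_zero_of_mul hDπ)) a₁ hI s (((hP s₁ a₁).1 s).lt_of_ne' hPs)

theorem distAt_Ptil_le_of_closed [Nonempty A] (hP : IsKernel P) (hπ : IsPolicy π) (hd : IsDist d)
    {G : Set S} (hdG : ∀ s, d s ≠ 0 → s ∈ G)
    (hG : ∀ s ∈ G, ∀ a, (s, a) ∉ I₁ → (s, a) ∉ I₂ ∧ ∀ s', 0 < P s a s' → s' ∈ G)
    (t : ℕ) (s : S) :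
    distAt (Ptil P I₁) (extPol π) (extDist d) t (some s) ≤
      distAt (Ptil P I₂) (extPol π) (extDist d) t (some s) := by
  induction t generalizing s with
  | zero => exact le_rfl
  | succ t ih =>
    rw [distAt_succ, distAt_succ, step_Ptil_some, step_Ptil_some]
    have hD₂ := isDist_distAt (isDist_extDist hd) (isKernel_Ptil hP I₂) (isPolicy_extPol hπ) t
    refine Finset.sum_le_sum fun s₁ _ => Finset.sum_le_sum fun a₁ _ => ?_
    have hrhs : 0 ≤ distAt (Ptil P I₂) (extPol π) (extDist d) t (some s₁) * π s₁ a₁ *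
        (if (s₁, a₁) ∈ I₂ then 0 else P s₁ a₁ s) :=
      mul_nonneg (mul_nonneg (hD₂.1 _) ((hπ s₁).1 a₁)) (by split_ifs; exacts [le_rfl, (hP s₁ a₁).1 s])
    by_cases hzero : distAt (Ptil P I₁) (extPol π) (extDist d) t (some s₁) = 0 ∨ (s₁, a₁) ∈ I₁
    · rcases hzero with h | h <;> simpa [h] using hrhs
    obtain ⟨hD, hI₁⟩ := not_or.1 hzero
    have hI₂ := (hG s₁ (mem_of_distAt_Ptil_ne_zero hP hdG (fun s hs a ha => (hG s hs a ha).2) hD)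
      a₁ hI₁).1
    rw [if_neg hI₁, if_neg hI₂]
    exact mul_le_mul_of_nonneg_right (mul_le_mul_of_nonneg_right (ih s₁) ((hπ s₁).1 a₁))
      ((hP s₁ a₁).1 s)

end Absorbing

variable [Nonempty A]

theorem stmt_10_general
    (P : S → A → S → ℝ) (γ : ℝ) (sbad sabs : S) (d0 : S → ℝ)
    (πstar Qb π μ : S → A → ℝ)
    (hP : IsKernel P) (hγ0 : 0 ≤ γ) (hγ1 : γ < 1)
    (hne : sbad ≠ sabs)
    (hPbad : ∀ a, P sbad a = pureDist sabs)
    (hPabs : ∀ a, P sabs a = pureDist sabs)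
    (hd0 : IsDist d0)
    (hπstar : IsPolicy πstar)
    (hopt : ∀ π', IsPolicy π' → ∀ s,
      vf P πstar (cost sbad) γ s ≤ vf P π' (cost sbad) γ s)
    (hπ : IsPolicy π) (hμ : IsPolicy μ)
    (hQbad : ∀ a : A, Qb sbad a = 1) (hQabs : ∀ a : A, Qb sabs a = 0)
    (hadm : SigmaAdmissible P Qb μ γ 0 sbad sabs)
    (hinit : ∑ s, d0 s * Qpol Qb μ s = ∑ s, d0 s * vf P πstar (cost sbad) γ s) :
    ∀ (s : S) (a : A),
      dsa (Ptil P (intSet Qb μ 0 sbad sabs)) (extPol π) γ (extDist d0) (some s) a ≠ 0 →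
      dsa (Ptil P (intSet (qf P πstar (cost sbad) γ) πstar 0 sbad sabs)) (extPol π) γ
        (extDist d0) (some s) a ≠ 0 := by
  intro s a h
  set V := vf P πstar (cost sbad) γ
  have hVQ : ∀ s a, V s ≤ qf P πstar (cost sbad) γ s a :=
    vf_le_qf_of_forall_vf_le hP hπstar hγ0 hγ1 hopt
  have hVμ : ∀ s, V s ≤ Qpol Qb μ s := fun s => (hopt μ hμ s).trans
    (vf_le_qpol_of_sigmaAdmissible hP hμ hγ0 hγ1 hne hPbad hPabs hQbad hQabs hadm s)
  have hd0_tight : ∀ s, d0 s ≠ 0 → Qpol Qb μ s = V s := fun s hs =>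
    (eq_of_sum_mul_eq_of_le hd0.1 hVμ hinit.symm hs).symm
  have hextDist := isDist_extDist hd0
  have hextPol := isPolicy_extPol hπ
  obtain ⟨t, ht⟩ := (dsa_ne_zero_iff (isKernel_Ptil hP _) hextPol hextDist hγ0 hγ1 _ _).1 h
  refine (dsa_ne_zero_iff (isKernel_Ptil hP _) hextPol hextDist hγ0 hγ1 _ _).2 ⟨t, ?_⟩
  have hle : distAt (Ptil P (intSet Qb μ 0 sbad sabs)) (extPol π) (extDist d0) t (some s) ≤
      distAt (Ptil P (intSet (qf P πstar (cost sbad) γ) πstar 0 sbad sabs)) (extPol π)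
        (extDist d0) t (some s) := by
    rcases hγ0.eq_or_lt with rfl | hγ
    · obtain rfl : t = 0 := by by_contra ht0; simp [zero_pow ht0] at ht
      exact le_rfl
    · exact distAt_Ptil_le_of_closed (G := {s | Qpol Qb μ s = V s}) hP hπ hd0 hd0_tight
        (fun s hs a ha => notMem_intSet_and_tight_succ hP hπstar hγ hγ1 hne hPbad hPabs hQabs
          hadm hVQ hVμ hs ha) t s
  obtain ⟨hγD, hπsa⟩ := mul_ne_zero_iff.1 ht
  obtain ⟨hγt, hD⟩ := mul_ne_zero_iff.1 hγD
  have hD_pos := ((isDist_distAt hextDist (isKernel_Ptil hP _) hextPol t).1 (some s)).lt_of_ne' hD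
  exact mul_ne_zero (mul_ne_zero hγt (hD_pos.trans_le hle).ne') hπsa

/-- the support of `d̃^π` (restricted to `S × A`) for any rule in `G₀`
is contained in the support of `d̃^{*,π}` for the optimal rule `G* = (Q̄*, π̄*, 0)`. -/
theorem stmt_10
    (P : S → A → S → ℝ) (γ : ℝ) (sbad sabs : S) (d0 : S → ℝ) (Rt : ℝ)
    (πstar Qb π μ : S → A → ℝ)
    (hP : IsKernel P) (hγ0 : 0 ≤ γ) (hγ1 : γ < 1)
    (hne : sbad ≠ sabs)
    (hPbad : ∀ a, P sbad a = pureDist sabs)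
    (hPabs : ∀ a, P sabs a = pureDist sabs)
    (hd0 : IsDist d0) (hRt : Rt ≤ 0)
    (hπstar : IsPolicy πstar)
    (hopt : ∀ π', IsPolicy π' → ∀ s,
      vf P πstar (cost sbad) γ s ≤ vf P π' (cost sbad) γ s)
    (hπ : IsPolicy π) (hμ : IsPolicy μ)
    (hQbad : ∀ a : A, Qb sbad a = 1) (hQabs : ∀ a : A, Qb sabs a = 0)
    (hadm : SigmaAdmissible P Qb μ γ 0 sbad sabs)
    (hinit : ∑ s, d0 s * Qpol Qb μ s = ∑ s, d0 s * vf P πstar (cost sbad) γ s) :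
    ∀ (s : S) (a : A),
      dsa (Ptil P (intSet Qb μ 0 sbad sabs)) (extPol π) γ (extDist d0) (some s) a ≠ 0 →
      dsa (Ptil P (intSet (qf P πstar (cost sbad) γ) πstar 0 sbad sabs)) (extPol π) γ
        (extDist d0) (some s) a ≠ 0 :=
  stmt_10_general P γ sbad sabs d0 πstar Qb π μ hP hγ0 hγ1 hne hPbad hPabs hd0 hπstar hopt hπ hμ
    hQbad hQabs hadm hinit

end SafeRL
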